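/- Suppose all points in block B are pairwise non-dissimilar, i.e., y_{ij} ≥ 0 for all i,j ∈ B (with y_{ij} ∈ {-1,0,1}). Then for all i,j ∈ B, the pairwise coefficient v_{ij} = -|y_{ij}|·(k·y_{ij} - Σ_{p=1}^{k-1} z*_{p,i} z*_{p,j}) is ≤ 0, hence the block optimization objective Σ_{i∈B} u_i z_i + Σ_{i,j∈B} v_{ij} z_i z_j over z ∈ {-1,1}^B is submodular (Proposition 1 of the paper). -/
import Mathlib


theorem stmt7 {B : Type*} [Fintype B] (k : ℕ) (hk : 1 ≤ k)
    (y : B → B → ℝ)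
    (hyval : ∀ i j, y i j = -1 ∨ y i j = 0 ∨ y i j = 1)
    (hy : ∀ i j, 0 ≤ y i j)
    (z : Fin (k - 1) → B → ℝ)
    (hz : ∀ p i, z p i = -1 ∨ z p i = 1)
    (v : B → B → ℝ)
    (hvdef : ∀ i j, v i j = -(|y i j| * ((k : ℝ) * y i j - ∑ p, z p i * z p j))) :
    ∀ i j : B, v i j ≤ 0 ∧
      v i j * 1 * 1 + v i j * (-1) * (-1) ≤
        v i j * 1 * (-1) + v i j * (-1) * 1 := by
  intro i j
  have hsum : ∑ p, z p i * z p j ≤ (k : ℝ) - 1 := by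
    calc ∑ p, z p i * z p j ≤ ∑ _p : Fin (k-1), (1:ℝ) := by
          apply Finset.sum_le_sum
          intro p _
          rcases hz p i with h1 | h1 <;> rcases hz p j with h2 | h2 <;>
            simp [h1, h2]
      _ = (k : ℝ) - 1 := by
          simp
          have : ((k - 1 : ℕ) : ℝ) = (k : ℝ) - 1 := by
            have := Nat.cast_sub hk (R := ℝ)
            simpa using this
          simpa using this
  have hv : v i j ≤ 0 := by
    rw [hvdef]
    rcases hyval i j with h | h | h
    · exfalso; linarith [hy i j]
    · simp [h]
    · rw [h]
      have : (1:ℝ) ≤ (k : ℝ) * 1 - ∑ p, z p i * z p j := by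
        have hk' : (1:ℝ) ≤ (k:ℝ) := by exact_mod_cast hk
        linarith
      simp only [abs_one, one_mul]
      linarith
  exact ⟨hv, by linarith⟩
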